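/- arXiv:1401.2638 — 3 statements merged into one kernel-verified Lean document; each statement's English description precedes it below -/
import Mathlib

section
/- Let a group G act as a convergence group on a compact metrizable space Z, and let Z' ⊆ Z be a nonempty infinite closed G-invariant subset. Then a point z ∈ Z' is a conical limit point for the action of G on Z if and only if z is a conical limit point for the action of G on Z'. -/
open Filter Topology Metric Pointwise

/-- The maps `z ↦ g n • z` converge to the constant map with value `b`, uniformly on
compact subsets of `Z` avoiding the point `a` (i.e. locally uniformly on `Z \ {a}`). -/
def ConvLocUnif {G Z : Type*} [Group G] [MetricSpace Z] [MulAction G Z]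
    (g : ℕ → G) (a b : Z) : Prop :=
  ∀ K : Set Z, IsCompact K → a ∉ K →
    TendstoUniformlyOn (fun n z => g n • z) (fun _ => b) atTop K

/-- The action of `G` on the compact metrizable space `Z` is a convergence action: it is an
action by homeomorphisms such that every injective sequence in `G` has a subsequence
converging locally uniformly, away from one point `a`, to a constant map with value `b`. -/
def IsConvergenceAction (G Z : Type*) [Group G] [MetricSpace Z] [MulAction G Z] : Prop :=
  (∀ g : G, Continuous fun z : Z => g • z) ∧
  ∀ g : ℕ → G, Function.Injective g →
    ∃ (a b : Z) (φ : ℕ → ℕ), StrictMono φ ∧ ConvLocUnif (fun k => g (φ k)) a b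

/-- `g` is a conical sequence for `z` with pole pair `(zm, zp)`. -/
def IsConicalSeq {G Z : Type*} [Group G] [MetricSpace Z] [MulAction G Z]
    (g : ℕ → G) (z zm zp : Z) : Prop :=
  Function.Injective g ∧ zm ≠ zp ∧
    Tendsto (fun n => g n • z) atTop (𝓝 zp) ∧ ConvLocUnif g z zm

/-- `z` is a conical limit point for the action of `G` on `Z`. -/
def IsConicalLimitPoint (G : Type*) {Z : Type*} [Group G] [MetricSpace Z] [MulAction G Z]
    (z : Z) : Prop :=
  ∃ (g : ℕ → G) (zm zp : Z), IsConicalSeq g z zm zp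

/-- `g` is a conical sequence for `z` with pole pair `(zm, zp)`, for the restricted
action of `G` on an invariant subset `Z' ⊆ Z`. -/
def IsConicalSeqOn {G Z : Type*} [Group G] [MetricSpace Z] [MulAction G Z]
    (Z' : Set Z) (g : ℕ → G) (z zm zp : Z) : Prop :=
  zm ∈ Z' ∧ zp ∈ Z' ∧ Function.Injective g ∧ zm ≠ zp ∧
    Tendsto (fun n => g n • z) atTop (𝓝 zp) ∧
    ∀ K : Set Z, IsCompact K → K ⊆ Z' → z ∉ K →
      TendstoUniformlyOn (fun n w => g n • w) (fun _ => zm) atTop K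

/-- `z` is a conical limit point for the restricted action of `G` on `Z' ⊆ Z`. -/
def IsConicalLimitPointOn (G : Type*) {Z : Type*} [Group G] [MetricSpace Z] [MulAction G Z]
    (Z' : Set Z) (z : Z) : Prop :=
  ∃ (g : ℕ → G) (zm zp : Z), IsConicalSeqOn Z' g z zm zp

/-- The action of `G` on `Z` is elementary: `G` is finite or there is a nonempty invariant
subset of cardinality at most 2. -/
def IsElementaryAction (G Z : Type*) [Group G] [MetricSpace Z] [MulAction G Z] : Prop :=
  Finite G ∨ ∃ S : Set Z, S.Nonempty ∧ S.encard ≤ 2 ∧ ∀ g : G, g • S = S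

/-- A Cannon–Thurston map: a continuous `G`-equivariant map from the boundary `B = ∂G` to `Z`. -/
def IsCannonThurston (G : Type*) {B Z : Type*} [Group G] [MetricSpace B] [MulAction G B]
    [MetricSpace Z] [MulAction G Z] (i : B → Z) : Prop :=
  Continuous i ∧ ∀ (g : G) (x : B), i (g • x) = g • i x

/-- `B` is (a realization of) the Gromov boundary of the word-hyperbolic group `G`:
the action of `G` on `B` is a convergence action in which every point is conical
(a uniform convergence action), which by Bowditch's theorem characterizes
word-hyperbolic groups acting on their Gromov boundary. -/
def IsHypBoundary (G B : Type*) [Group G] [MetricSpace B] [CompactSpace B]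
    [MulAction G B] : Prop :=
  IsConvergenceAction G B ∧ ∀ x : B, IsConicalLimitPoint G x

/-- `g` acts loxodromically on `Z` with repelling point `am` and attracting point `ap`. -/
def IsLoxodromicOn {G Z : Type*} [Group G] [MetricSpace Z] [MulAction G Z]
    (g : G) (am ap : Z) : Prop :=
  ¬ IsOfFinOrder g ∧ am ≠ ap ∧ {z : Z | g • z = z} = {am, ap} ∧
    (∀ K : Set Z, IsCompact K → am ∉ K →
      TendstoUniformlyOn (fun (n : ℕ) z => g ^ n • z) (fun _ => ap) atTop K) ∧
    (∀ K : Set Z, IsCompact K → ap ∉ K →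
      TendstoUniformlyOn (fun (n : ℕ) z => g⁻¹ ^ n • z) (fun _ => am) atTop K)

/-- `g` acts parabolically on `Z`: it has infinite order and exactly one fixed point. -/
def IsParabolicOn {G : Type*} (Z : Type*) [Group G] [MetricSpace Z] [MulAction G Z]
    (g : G) : Prop :=
  ¬ IsOfFinOrder g ∧ ∃ a : Z, {z : Z | g • z = z} = {a}

/-- `x ∈ ∂G` is asymptotic to the lamination `L_i`: for every conical sequence for `x`
with pole pair `(xm, xp)` one has `i xm = i xp`. -/
def AsymptoticTo (G : Type*) {B Z : Type*} [Group G] [MetricSpace B] [MulAction G B]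
    [MetricSpace Z] [MulAction G Z] (i : B → Z) (x : B) : Prop :=
  ∀ (g : ℕ → G) (xm xp : B), IsConicalSeq g x xm xp → i xm = i xp

section ConicalSequences

variable {G Z : Type*} [Group G] [MetricSpace Z] [MulAction G Z]

theorem ConvLocUnif.tendsto_smul {g : ℕ → G} {a b w : Z} (h : ConvLocUnif g a b) (hw : w ≠ a) :
    Tendsto (fun n => g n • w) atTop (𝓝 b) := by
  simpa using (h {w} isCompact_singleton (by simpa using hw.symm)).tendsto_at rfl

theorem IsConicalSeqOn.tendsto_smul {Z' : Set Z} {g : ℕ → G} {z zm zp w : Z}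
    (h : IsConicalSeqOn Z' g z zm zp) (hw : w ∈ Z') (hwz : w ≠ z) :
    Tendsto (fun n => g n • w) atTop (𝓝 zm) := by
  simpa using (h.2.2.2.2.2 {w} isCompact_singleton (by simpa using hw)
    (by simpa using hwz.symm)).tendsto_at rfl

theorem IsConicalSeqOn.comp_strictMono {Z' : Set Z} {g : ℕ → G} {z zm zp : Z}
    (h : IsConicalSeqOn Z' g z zm zp) {φ : ℕ → ℕ} (hφ : StrictMono φ) :
    IsConicalSeqOn Z' (g ∘ φ) z zm zp := by
  obtain ⟨hzm, hzp, hinj, hne, htend, hunif⟩ := h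
  exact ⟨hzm, hzp, hinj.comp hφ.injective, hne, htend.comp hφ.tendsto_atTop,
    fun K hK hKZ' hzK u hu => hφ.tendsto_atTop.eventually (hunif K hK hKZ' hzK u hu)⟩

theorem IsConicalSeq.isConicalSeqOn {Z' : Set Z} {g : ℕ → G} {z zm zp w : Z}
    (h : IsConicalSeq g z zm zp) (hcl : IsClosed Z') (hmaps : ∀ (k : G), ∀ x ∈ Z', k • x ∈ Z')
    (hz : z ∈ Z') (hw : w ∈ Z') (hwz : w ≠ z) : IsConicalSeqOn Z' g z zm zp := by
  obtain ⟨hinj, hne, htend, hunif⟩ := h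
  have hzm : zm ∈ Z' := hcl.mem_of_tendsto (hunif.tendsto_smul hwz)
    (.of_forall fun n => hmaps _ w hw)
  have hzp : zp ∈ Z' := hcl.mem_of_tendsto htend (.of_forall fun n => hmaps _ z hz)
  exact ⟨hzm, hzp, hinj, hne, htend, fun K hK _ hzK => hunif K hK hzK⟩

/-- A third point `w` of `Z'` pins down the poles of `g`: its orbit tends to `zm` and to `b`,
and then `a ≠ z` would force `g n • z` to tend to `b = zm` as well as to `zp`. -/
theorem IsConicalSeqOn.isConicalSeq {Z' : Set Z} {g : ℕ → G} {z zm zp a b w : Z}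
    (h : IsConicalSeqOn Z' g z zm zp) (hc : ConvLocUnif g a b)
    (hw : w ∈ Z') (hwa : w ≠ a) (hwz : w ≠ z) : IsConicalSeq g z zm zp := by
  have hb : b = zm := tendsto_nhds_unique (hc.tendsto_smul hwa) (h.tendsto_smul hw hwz)
  obtain ⟨-, -, hinj, hne, htend, -⟩ := h
  have ha : a = z := by
    by_contra haz
    exact hne (hb ▸ tendsto_nhds_unique (hc.tendsto_smul (Ne.symm haz)) htend)
  subst ha hb
  exact ⟨hinj, hne, htend, hc⟩

end ConicalSequences

theorem stmt0_general {G Z : Type*} [Group G] [MetricSpace Z] [MulAction G Z]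
    (hconv : IsConvergenceAction G Z)
    (Z' : Set Z) (hinf : Z'.Infinite) (hcl : IsClosed Z')
    (hinv : ∀ g : G, g • Z' = Z') (z : Z) (hz : z ∈ Z') :
    IsConicalLimitPoint G z ↔ IsConicalLimitPointOn G Z' z := by
  have hmaps : ∀ (g : G), ∀ w ∈ Z', g • w ∈ Z' := fun g w hw => hinv g ▸ Set.smul_mem_smul_set hw
  constructor
  · rintro ⟨g, zm, zp, hg⟩
    obtain ⟨w, hw, hwz⟩ := (hinf.sdiff (Set.finite_singleton z)).nonempty
    exact ⟨g, zm, zp, hg.isConicalSeqOn hcl hmaps hz hw hwz⟩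
  · rintro ⟨g, zm, zp, hg⟩
    obtain ⟨a, b, φ, hφ, hc⟩ := hconv.2 g hg.2.2.1
    obtain ⟨w, hw, hwaz⟩ := (hinf.sdiff (Set.toFinite {a, z})).nonempty
    simp only [Set.mem_insert_iff, Set.mem_singleton_iff, not_or] at hwaz
    exact ⟨g ∘ φ, zm, zp, (hg.comp_strictMono hφ).isConicalSeq hc hw hwaz.1 hwaz.2⟩

/-- If `G` acts as a convergence group on a compact metrizable space `Z`
and `Z' ⊆ Z` is a nonempty infinite closed `G`-invariant subset, then a point `z ∈ Z'` is a
conical limit point for the action of `G` on `Z` iff it is a conical limit point for the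
restricted action of `G` on `Z'`. -/
theorem stmt0 {G Z : Type*} [Group G] [MetricSpace Z] [CompactSpace Z] [MulAction G Z]
    (hconv : IsConvergenceAction G Z)
    (Z' : Set Z) (hne : Z'.Nonempty) (hinf : Z'.Infinite) (hcl : IsClosed Z')
    (hinv : ∀ g : G, g • Z' = Z') (z : Z) (hz : z ∈ Z') :
    IsConicalLimitPoint G z ↔ IsConicalLimitPointOn G Z' z :=
  stmt0_general hconv Z' hinf hcl hinv z hz
end

section
/- Let G be a word-hyperbolic group acting as a non-elementary convergence group on a compact metrizable space Z, and suppose g ∈ G is an accidental parabolic (an infinite-order element acting parabolically on Z). If i : ∂G → Z is a Cannon–Thurston map, then both fixed points of g in ∂G are sent by i to the unique fixed point of g in Z. -/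
open Filter Topology Metric Pointwise

theorem IsLoxodromicOn.smul_left {G X : Type*} [Group G] [MetricSpace X] [MulAction G X]
    {g : G} {am ap : X} (h : IsLoxodromicOn g am ap) : g • am = am := by
  have : am ∈ {x : X | g • x = x} := by rw [h.2.2.1]; exact Set.mem_insert am {ap}
  exact this

theorem IsLoxodromicOn.smul_right {G X : Type*} [Group G] [MetricSpace X] [MulAction G X]
    {g : G} {am ap : X} (h : IsLoxodromicOn g am ap) : g • ap = ap := by
  have : ap ∈ {x : X | g • x = x} := by rw [h.2.2.1]; exact Set.mem_insert_of_mem am rfl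
  exact this

theorem IsCannonThurston.smul_apply_eq_of_smul_eq {G B Z : Type*} [Group G] [MetricSpace B]
    [MulAction G B] [MetricSpace Z] [MulAction G Z] {i : B → Z} (hi : IsCannonThurston G i)
    {g : G} {x : B} (hx : g • x = x) : g • i x = i x := by
  rw [← hi.2, hx]

theorem eq_of_smul_eq_of_fixedPoints_eq_singleton {G X : Type*} [Group G] [MulAction G X]
    {g : G} {a x : X} (hfix : {x : X | g • x = x} = {a}) (hx : g • x = x) : x = a := by
  have : x ∈ {x : X | g • x = x} := hx
  rwa [hfix] at this

theorem stmt2_general {G B Z : Type*} [Group G] [MetricSpace B] [MulAction G B]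
    [MetricSpace Z] [MulAction G Z]
    (i : B → Z) (hi : IsCannonThurston G i)
    (g : G) (a : Z) (hfix : {z : Z | g • z = z} = {a})
    (xm xp : B) (hgB : IsLoxodromicOn g xm xp) :
    i xm = a ∧ i xp = a :=
  ⟨eq_of_smul_eq_of_fixedPoints_eq_singleton hfix (hi.smul_apply_eq_of_smul_eq hgB.smul_left),
    eq_of_smul_eq_of_fixedPoints_eq_singleton hfix (hi.smul_apply_eq_of_smul_eq hgB.smul_right)⟩

/-- If a word-hyperbolic group `G` (with Gromov boundary `B`) acts as a
non-elementary convergence group on compact metrizable `Z`, `g ∈ G` is an accidental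
parabolic (infinite order, acting parabolically on `Z` with unique fixed point `a`), and
`i : B → Z` is a Cannon–Thurston map, then both fixed points `xm, xp` of `g` in the boundary
`B` are sent by `i` to `a`. -/
theorem stmt2 {G B Z : Type*} [Group G] [MetricSpace B] [CompactSpace B] [MulAction G B]
    [MetricSpace Z] [CompactSpace Z] [MulAction G Z]
    (hB : IsHypBoundary G B)
    (hZ : IsConvergenceAction G Z) (hZne : ¬ IsElementaryAction G Z)
    (i : B → Z) (hi : IsCannonThurston G i)
    (g : G) (hg : ¬ IsOfFinOrder g) (a : Z) (hfix : {z : Z | g • z = z} = {a})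
    (xm xp : B) (hgB : IsLoxodromicOn g xm xp) :
    i xm = a ∧ i xp = a :=
  stmt2_general i hi g a hfix xm xp hgB
end

section
/- Suppose a word-hyperbolic group G acts on a compact metrizable space Z as a non-elementary convergence group, i : ∂G → Z is a Cannon–Thurston map, z ∈ Z is a conical limit point, and (g_n) is a conical sequence for z with pole pair (z_-, z_+). Then there exists x ∈ i^{-1}(z) and a subsequence (g_{n_k}) which is a conical sequence for x (for the action of G on ∂G) with some pole pair (x_-, x_+) satisfying i(x_-) = z_- and i(x_+) = z_+; in particular i(x_-) ≠ i(x_+). -/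
/-!
Pass to a subsequence of `g` that converges on `∂G` to a constant `b` away from a point `a`.
Since the range of `i` is a nonempty invariant set, non-elementarity gives it at least three
points, so we can test this convergence at a point whose image avoids the poles in `Z`: by
continuity and equivariance of `i` this forces `i b = zm`, and the same argument for the inverse
sequence, which converges to `a` away from `b`, forces `i a = z`. Then `x = a`, and `xp` is any
accumulation point of `g n • a`, whose image is the limit `zp` of `g n • z`.
-/

open Filter Topology Metric Pointwise

namespace ConvLocUnif

variable {G Z : Type*} [Group G] [MetricSpace Z] [MulAction G Z] {g : ℕ → G} {a b : Z}

lemma tendsto_smul_s5 (h : ConvLocUnif g a b) {w : Z} (hw : w ≠ a) :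
    Tendsto (fun n => g n • w) atTop (𝓝 b) :=
  tendstoUniformlyOn_singleton_iff_tendsto.1 <|
    h {w} isCompact_singleton (Set.notMem_singleton_iff.2 hw.symm)

lemma comp (h : ConvLocUnif g a b) {ψ : ℕ → ℕ} (hψ : Tendsto ψ atTop atTop) :
    ConvLocUnif (fun k => g (ψ k)) a b :=
  fun K hK haK u hu => hψ.eventually (h K hK haK u hu)

/-- The inverses converge back to the repelling point: were `(g n)⁻¹ • w` to stay outside
`ball a ε`, it would lie in the compact set where `g n` pushes everything close to `b`, so
`w = g n • (g n)⁻¹ • w` would be close to `b`. -/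
lemma tendsto_inv_smul [CompactSpace Z] (h : ConvLocUnif g a b) {w : Z} (hw : w ≠ b) :
    Tendsto (fun n => (g n)⁻¹ • w) atTop (𝓝 a) := by
  rw [Metric.tendsto_nhds]
  intro ε hε
  have hK : IsCompact (ball a ε)ᶜ := isOpen_ball.isClosed_compl.isCompact
  have haK : a ∉ (ball a ε)ᶜ := fun ha => ha (mem_ball_self hε)
  filter_upwards [Metric.tendstoUniformlyOn_iff.1 (h _ hK haK) (dist w b) (dist_pos.2 hw)]
    with n hn
  by_contra hfar
  have := hn _ hfar
  rw [smul_inv_smul, dist_comm] at this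
  exact lt_irrefl _ this

end ConvLocUnif

lemma Set.exists_apply_ne_ne_of_two_lt_encard_range {α β : Type*} {f : α → β}
    (hf : 2 < (Set.range f).encard) (p q : β) : ∃ w, f w ≠ p ∧ f w ≠ q := by
  have hpq : ({p, q} : Set β).encard ≤ 2 :=
    (Set.encard_insert_le _ _).trans (by rw [Set.encard_singleton]; rfl)
  obtain ⟨_, ⟨w, rfl⟩, hw⟩ :=
    Set.not_subset.1 fun hsub => (Set.encard_le_encard hsub).trans hpq |>.not_gt hf
  simp only [Set.mem_insert_iff, Set.mem_singleton_iff, not_or] at hw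
  exact ⟨w, hw⟩

namespace IsCannonThurston

variable {G B Z : Type*} [Group G] [MetricSpace B] [MulAction G B] [MetricSpace Z]
  [MulAction G Z] {i : B → Z}

lemma smul_range (hi : IsCannonThurston G i) (g : G) : g • Set.range i = Set.range i := by
  ext z
  constructor
  · rintro ⟨_, ⟨x, rfl⟩, rfl⟩
    exact ⟨g • x, hi.2 g x⟩
  · rintro ⟨x, rfl⟩
    exact ⟨i (g⁻¹ • x), ⟨g⁻¹ • x, rfl⟩, by simp only [← hi.2, smul_inv_smul]⟩

lemma two_lt_encard_range [Nonempty B] (hi : IsCannonThurston G i)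
    (hZ : ¬ IsElementaryAction G Z) : 2 < (Set.range i).encard :=
  lt_of_not_ge fun hle => hZ <| Or.inr ⟨_, Set.range_nonempty i, hle, hi.smul_range⟩

lemma tendsto_smul_apply (hi : IsCannonThurston G i) {g : ℕ → G} {x y : B}
    (h : Tendsto (fun n => g n • x) atTop (𝓝 y)) :
    Tendsto (fun n => g n • i x) atTop (𝓝 (i y)) := by
  simpa only [Function.comp_def, hi.2] using (hi.1.tendsto y).comp h

lemma apply_eq_of_convLocUnif [CompactSpace B] [CompactSpace Z] (hi : IsCannonThurston G i)
    (hrange : 2 < (Set.range i).encard) {g : ℕ → G} {a b : B} {z zm : Z}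
    (hB : ConvLocUnif g a b) (hZ : ConvLocUnif g z zm) : i a = z ∧ i b = zm := by
  have hib : i b = zm := by
    obtain ⟨w, hwz, hwa⟩ := Set.exists_apply_ne_ne_of_two_lt_encard_range hrange z (i a)
    exact tendsto_nhds_unique (hi.tendsto_smul_apply (hB.tendsto_smul_s5 (ne_of_apply_ne i hwa)))
      (hZ.tendsto_smul_s5 hwz)
  obtain ⟨w, hwzm, -⟩ := Set.exists_apply_ne_ne_of_two_lt_encard_range hrange zm zm
  have hwb : w ≠ b := ne_of_apply_ne i (hib ▸ hwzm)
  exact ⟨tendsto_nhds_unique (hi.tendsto_smul_apply (hB.tendsto_inv_smul hwb))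
    (hZ.tendsto_inv_smul hwzm), hib⟩

end IsCannonThurston

theorem stmt5_general {G B Z : Type*} [Group G] [MetricSpace B] [CompactSpace B] [MulAction G B]
    [MetricSpace Z] [CompactSpace Z] [MulAction G Z]
    (hB : IsHypBoundary G B)
    (hZne : ¬ IsElementaryAction G Z)
    (i : B → Z) (hi : IsCannonThurston G i)
    (z : Z) (g : ℕ → G) (zm zp : Z) (hcon : IsConicalSeq g z zm zp) :
    ∃ (x : B) (φ : ℕ → ℕ) (xm xp : B), StrictMono φ ∧ i x = z ∧
      IsConicalSeq (fun k => g (φ k)) x xm xp ∧ i xm = zm ∧ i xp = zp ∧ i xm ≠ i xp := by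
  obtain ⟨hginj, hzmzp, hgz, hgc⟩ := hcon
  obtain ⟨a, b, φ, hφ, hab⟩ := hB.1.2 g hginj
  have : Nonempty B := ⟨a⟩
  obtain ⟨hia, hib⟩ := hi.apply_eq_of_convLocUnif (hi.two_lt_encard_range hZne) hab
    (hgc.comp hφ.tendsto_atTop)
  obtain ⟨xp, σ, hσ, hxp⟩ := CompactSpace.tendsto_subseq fun k => g (φ k) • a
  have hφσ : StrictMono (φ ∘ σ) := hφ.comp hσ
  have hixp : i xp = zp := tendsto_nhds_unique (hia ▸ hi.tendsto_smul_apply hxp)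
    (hgz.comp hφσ.tendsto_atTop)
  refine ⟨a, φ ∘ σ, b, xp, hφσ, hia,
    ⟨hginj.comp hφσ.injective, fun h => hzmzp (by rw [← hib, ← hixp, h]), hxp,
      hab.comp hσ.tendsto_atTop⟩, hib, hixp, hib ▸ hixp ▸ hzmzp⟩

/-- Conical sequences come from conical sequences on the boundary: if `z` is
conical for the action of `G` on `Z` with conical sequence `g` and pole pair `(zm, zp)`, then
there are `x ∈ i⁻¹(z)` and a subsequence of `g` which is a conical sequence for `x` in the
boundary `B`, with pole pair `(xm, xp)` satisfying `i xm = zm` and `i xp = zp`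
(in particular `i xm ≠ i xp`). -/
theorem stmt5 {G B Z : Type*} [Group G] [MetricSpace B] [CompactSpace B] [MulAction G B]
    [MetricSpace Z] [CompactSpace Z] [MulAction G Z]
    (hB : IsHypBoundary G B)
    (hZ : IsConvergenceAction G Z) (hZne : ¬ IsElementaryAction G Z)
    (i : B → Z) (hi : IsCannonThurston G i)
    (z : Z) (g : ℕ → G) (zm zp : Z) (hcon : IsConicalSeq g z zm zp) :
    ∃ (x : B) (φ : ℕ → ℕ) (xm xp : B), StrictMono φ ∧ i x = z ∧
      IsConicalSeq (fun k => g (φ k)) x xm xp ∧ i xm = zm ∧ i xp = zp ∧ i xm ≠ i xp :=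
  stmt5_general hB hZne i hi z g zm zp hcon
end
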